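/- Let G be a connected finite simple graph with a split between A and B, let τ be a circle representation of G, and let γ_1, …, γ_{2k} be the maximal A- and B-subwords of the circular subsequence γ of τ induced by A ∪ B. If x occurs in γ_i, y occurs in γ_j, x ≠ y, and γ_j is neither γ_i nor its opposite word γ_{i+k} (indices modulo 2k), then x and y are adjacent in G. -/

import Mathlib

/-!
View the blocks `γ 0, …, γ (2k-1)` as `2k` points on a circle, and a symbol of `A ∪ B` as the
chord joining the two blocks that hold its occurrences (it cannot occur twice in one block, since
it alternates with the symbols of the other side). Two symbols alternate exactly when their chords
cross, so every chord of an `A`-symbol crosses every chord of a `B`-symbol. Then two chords of the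
same side are equal or cross: otherwise a block of the other parity next to one of their endpoints
would carry a chord missing one of them. Hence each point lies on a single chord, the partner map
exchanges the points on the two sides of any chord, and every chord is a diameter. The chords of
`x` and `y` are then distinct diameters, and those cross.
-/

/-- The segment of the word `τ` strictly between the two occurrences of `u`. -/
def betweenOccs {V : Type*} [DecidableEq V] (τ : List V) (u : V) : List V :=
  ((τ.dropWhile (fun x => decide (x ≠ u))).drop 1).takeWhile (fun x => decide (x ≠ u))

/-- Two symbols `u` and `v` alternate in the circular word `τ` (i.e. their four
occurrences appear in cyclic order `u, v, u, v`): exactly one of the two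
occurrences of `v` lies strictly between the two occurrences of `u`. -/
def Alternates {V : Type*} [DecidableEq V] (τ : List V) (u v : V) : Prop :=
  (betweenOccs τ u).count v = 1

/-- `τ` is a circle representation of `G`: a circular word (modelled as a list read
cyclically) in which every vertex occurs exactly twice, and two distinct vertices are
adjacent iff their occurrences alternate. -/
def IsCircleRep {V : Type*} [DecidableEq V] (G : SimpleGraph V) (τ : List V) : Prop :=
  (∀ v : V, τ.count v = 2) ∧
  ∀ u v : V, u ≠ v → (G.Adj u v ↔ Alternates τ u v)

/-- A split of `G` between `A` and `B`, with short sides `SA = 𝔰(A)` and `SB = 𝔰(B)`: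
a partition of the vertices into four parts such that every vertex of `A` is adjacent
to every vertex of `B`, there are no edges between `SA` and `B ∪ SB` nor between
`SB` and `A ∪ SA`, and both sides have at least two vertices. -/
def IsSplit {V : Type*} [DecidableEq V] (G : SimpleGraph V) (A B SA SB : Finset V) : Prop :=
  (∀ v : V, v ∈ A ∪ B ∪ SA ∪ SB) ∧
  Disjoint A B ∧ Disjoint A SA ∧ Disjoint A SB ∧
  Disjoint B SA ∧ Disjoint B SB ∧ Disjoint SA SB ∧
  (∀ a ∈ A, ∀ b ∈ B, G.Adj a b) ∧
  (∀ s ∈ SA, ∀ x ∈ B ∪ SB, ¬ G.Adj s x) ∧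
  (∀ s ∈ SB, ∀ x ∈ A ∪ SA, ¬ G.Adj s x) ∧
  2 ≤ (A ∪ SA).card ∧ 2 ≤ (B ∪ SB).card

namespace List

variable {α : Type*} [DecidableEq α]

theorem exists_eq_append_cons_of_count_eq_one {l : List α} {u : α} (h : l.count u = 1) :
    ∃ s t, l = s ++ u :: t ∧ u ∉ s ∧ u ∉ t := by
  have hu : u ∈ l := count_pos_iff.mp (by omega)
  obtain ⟨s, t, rfl, hs⟩ := eq_append_cons_of_mem hu
  simp only [count_append, count_cons_self, count_eq_zero.mpr hs] at h
  exact ⟨s, t, rfl, hs, count_eq_zero.mp (by omega)⟩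

theorem exists_eq_append_cons_append_cons_of_count_eq_two {l : List α} {u : α}
    (h : l.count u = 2) :
    ∃ s₀ s₁ s₂, l = s₀ ++ u :: s₁ ++ u :: s₂ ∧ u ∉ s₀ ∧ u ∉ s₁ ∧ u ∉ s₂ := by
  have hu : u ∈ l := count_pos_iff.mp (by omega)
  obtain ⟨s₀, t, rfl, h₀⟩ := eq_append_cons_of_mem hu
  simp only [count_append, count_cons_self, count_eq_zero.mpr h₀] at h
  have ht : t.count u = 1 := by omega
  obtain ⟨s₁, s₂, rfl, h₁, h₂⟩ := exists_eq_append_cons_of_count_eq_one ht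
  exact ⟨s₀, s₁, s₂, by simp, h₀, h₁, h₂⟩

end List

section Alternation

variable {α : Type*} [DecidableEq α]

theorem betweenOccs_append_cons_append_cons {s₀ s₁ s₂ : List α} {u : α} (h₀ : u ∉ s₀)
    (h₁ : u ∉ s₁) : betweenOccs (s₀ ++ u :: s₁ ++ u :: s₂) u = s₁ := by
  have hne : ∀ s : List α, u ∉ s → ∀ x ∈ s, decide (x ≠ u) = true := fun s hs x hx => by
    simpa using ne_of_mem_of_not_mem hx hs
  rw [betweenOccs, List.append_assoc, List.dropWhile_append_of_pos (hne _ h₀), List.cons_append,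
    List.dropWhile_cons_of_neg (by simp), List.drop_one, List.tail_cons,
    List.takeWhile_append_of_pos (hne _ h₁), List.takeWhile_cons_of_neg (by simp),
    List.append_nil]

theorem alternates_append_cons_append_cons_iff {s₀ s₁ s₂ : List α} {u v : α} (h₀ : u ∉ s₀)
    (h₁ : u ∉ s₁) : Alternates (s₀ ++ u :: s₁ ++ u :: s₂) u v ↔ s₁.count v = 1 := by
  rw [Alternates, betweenOccs_append_cons_append_cons h₀ h₁]

theorem alternates_filter_iff {p : α → Bool} {l : List α} {u v : α} (hu : p u) (hv : p v)
    (h : l.count u = 2) : Alternates (l.filter p) u v ↔ Alternates l u v := by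
  obtain ⟨s₀, s₁, s₂, rfl, h₀, h₁, -⟩ := List.exists_eq_append_cons_append_cons_of_count_eq_two h
  have hfilter : (s₀ ++ u :: s₁ ++ u :: s₂).filter p
      = s₀.filter p ++ u :: s₁.filter p ++ u :: s₂.filter p := by
    simp [List.filter_append, hu]
  rw [hfilter, alternates_append_cons_append_cons_iff (mt List.mem_of_mem_filter h₀)
    (mt List.mem_of_mem_filter h₁), alternates_append_cons_append_cons_iff h₀ h₁,
    List.count_filter hv]

theorem alternates_rotate_one_iff {x : α} {l : List α} {u v : α} (hu : (x :: l).count u = 2)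
    (hv : (x :: l).count v = 2) : Alternates (l ++ [x]) u v ↔ Alternates (x :: l) u v := by
  by_cases hx : x = u
  -- moving an occurrence of `u` to the end swaps the segment between the `u`s with its complement
  · subst hx
    rw [List.count_cons_self] at hu
    have hu' : l.count x = 1 := by omega
    obtain ⟨s₁, s₂, rfl, h₁, h₂⟩ := List.exists_eq_append_cons_of_count_eq_one hu'
    have e₁ : x :: (s₁ ++ x :: s₂) = [] ++ x :: s₁ ++ x :: s₂ := rfl
    have e₂ : s₁ ++ x :: s₂ ++ [x] = s₁ ++ x :: s₂ ++ x :: [] := rfl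
    rw [e₁, e₂, alternates_append_cons_append_cons_iff h₁ h₂,
      alternates_append_cons_append_cons_iff List.not_mem_nil h₁]
    by_cases hvx : v = x
    · subst hvx; simp [List.count_eq_zero.mpr h₁, List.count_eq_zero.mpr h₂]
    · simp only [List.count_cons, List.count_append, beq_iff_eq] at hv
      omega
  · rw [List.count_cons_of_ne hx] at hu
    obtain ⟨s₀, s₁, s₂, rfl, h₀, h₁, -⟩ :=
      List.exists_eq_append_cons_append_cons_of_count_eq_two hu
    have e₁ : x :: (s₀ ++ u :: s₁ ++ u :: s₂) = x :: s₀ ++ u :: s₁ ++ u :: s₂ := rfl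
    have e₂ : s₀ ++ u :: s₁ ++ u :: s₂ ++ [x] = s₀ ++ u :: s₁ ++ u :: (s₂ ++ [x]) := by simp
    rw [e₁, e₂, alternates_append_cons_append_cons_iff h₀ h₁,
      alternates_append_cons_append_cons_iff (by simp [Ne.symm hx, h₀]) h₁]

theorem alternates_rotate_iff {l : List α} {u v : α} (hu : l.count u = 2) (hv : l.count v = 2)
    (n : ℕ) : Alternates (l.rotate n) u v ↔ Alternates l u v := by
  induction n generalizing l with
  | zero => rw [List.rotate_zero]
  | succ n ih =>
    cases l with
    | nil => simp at hu
    | cons x l =>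
      have hcount : ∀ y, (l ++ [x]).count y = (x :: l).count y := fun y => by
        simp [List.count_cons, List.count_append]
      rw [List.rotate_cons_succ, ih (by rwa [hcount]) (by rwa [hcount]),
        alternates_rotate_one_iff hu hv]

theorem List.IsRotated.alternates_iff {l l' : List α} {u v : α} (h : l ~r l')
    (hu : l.count u = 2) (hv : l.count v = 2) : Alternates l u v ↔ Alternates l' u v := by
  obtain ⟨n, rfl⟩ := h
  exact (alternates_rotate_iff hu hv n).symm

end Alternation

/-- The chords `{a, b}` and `{c, d}` of a circle through the points `0, 1, 2, …` cross. -/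
def Interleaved (a b c d : ℕ) : Prop :=
  a < c ∧ c < b ∧ b < d ∨ c < a ∧ a < d ∧ d < b

/-- Chords `C a b` between the points `0, …, 2k-1` of a circle, coloured by the parity of their
ends. -/
structure CrossingChordSystem (k : ℕ) (C : ℕ → ℕ → Prop) : Prop where
  lt : ∀ {a b}, C a b → a < b ∧ b < 2 * k
  mod_two_eq : ∀ {a b}, C a b → a % 2 = b % 2
  exists_of_lt : ∀ m < 2 * k, ∃ a b, C a b ∧ (m = a ∨ m = b)
  interleaved : ∀ {a b c d}, C a b → C c d → a % 2 ≠ c % 2 → Interleaved a b c d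

namespace CrossingChordSystem

variable {k : ℕ} {C : ℕ → ℕ → Prop}

theorem eq_or_interleaved (h : CrossingChordSystem k C) {a b c d : ℕ} (hab : C a b)
    (hcd : C c d) : a = c ∧ b = d ∨ Interleaved a b c d := by
  wlog hac : a ≤ c generalizing a b c d
  · rcases this hcd hab (by omega) with ⟨rfl, rfl⟩ | hi
    · exact Or.inl ⟨rfl, rfl⟩
    · exact Or.inr (by unfold Interleaved at hi ⊢; omega)
  by_cases hpar : a % 2 = c % 2
  swap
  · exact Or.inr (h.interleaved hab hcd hpar)
  obtain ⟨hab', hb⟩ := h.lt hab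
  obtain ⟨hcd', hd⟩ := h.lt hcd
  have hpb := h.mod_two_eq hab
  have hpd := h.mod_two_eq hcd
  have separated : ∀ p < 2 * k, p % 2 ≠ a % 2 →
      ∃ q, (a < p ∧ p < b ↔ ¬(a < q ∧ q < b)) ∧ (c < p ∧ p < d ↔ ¬(c < q ∧ q < d)) := by
    intro p hp hpa
    obtain ⟨p', q', hpq, hp' | hp'⟩ := h.exists_of_lt p hp
    all_goals
      have := h.mod_two_eq hpq
      have h₁ := h.interleaved hab hpq (by omega)
      have h₂ := h.interleaved hcd hpq (by omega)
      unfold Interleaved at h₁ h₂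
    · exact ⟨q', by omega⟩
    · exact ⟨p', by omega⟩
  -- otherwise a point of the other colour next to an end has no partner across both chords
  rcases eq_or_lt_of_le hac with rfl | hac
  · rcases lt_trichotomy b d with hbd | rfl | hbd
    · obtain ⟨q, h₁, h₂⟩ := separated (b + 1) (by omega) (by omega); omega
    · exact Or.inl ⟨rfl, rfl⟩
    · obtain ⟨q, h₁, h₂⟩ := separated (d + 1) (by omega) (by omega); omega
  by_cases hbc : b ≤ c
  · by_cases hd' : d + 1 < 2 * k
    · obtain ⟨q, h₁, h₂⟩ := separated (d + 1) hd' (by omega); omega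
    · obtain ⟨q, h₁, h₂⟩ := separated 0 (by omega) (by omega); omega
  by_cases hbd : b < d
  · exact Or.inr (Or.inl ⟨hac, by omega, hbd⟩)
  · obtain ⟨q, h₁, h₂⟩ := separated (c - 1) (by omega) (by omega); omega

theorem eq_of_endpoint_eq (h : CrossingChordSystem k C) {a b c d : ℕ} (hab : C a b)
    (hcd : C c d) (hend : a = c ∨ a = d ∨ b = c ∨ b = d) : a = c ∧ b = d := by
  rcases h.eq_or_interleaved hab hcd with he | hi
  · exact he
  · unfold Interleaved at hi; omega

theorem eq_add (h : CrossingChordSystem k C) {a b : ℕ} (hab : C a b) : b = a + k := by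
  obtain ⟨hab', hb⟩ := h.lt hab
  let R : ℕ → ℕ → Prop := fun m p => C m p ∨ C p m
  have across : ∀ m < 2 * k, m ≠ a → m ≠ b →
      ∃ p < 2 * k, R m p ∧ p ≠ a ∧ p ≠ b ∧ (a < m ∧ m < b ↔ ¬(a < p ∧ p < b)) := by
    intro m hm hma hmb
    obtain ⟨p, q, hpq, rfl | rfl⟩ := h.exists_of_lt m hm
    all_goals
      have := h.lt hpq
      rcases h.eq_or_interleaved hab hpq with he | hi
      · omega
      unfold Interleaved at hi
    · exact ⟨q, by omega, Or.inl hpq, by omega⟩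
    · exact ⟨p, by omega, Or.inr hpq, by omega⟩
  -- the partner relation matches the points inside `(a, b)` with those outside `[a, b]`
  have card_le : ∀ s t : Finset ℕ, (∀ m ∈ s, ∃ p ∈ t, R m p) → s.card ≤ t.card := by
    refine fun s t hst => Finset.card_le_card_of_forall_subsingleton R hst ?_
    rintro p - m ⟨-, hm⟩ m' ⟨-, hm'⟩
    rcases hm with hm | hm <;> rcases hm' with hm' | hm' <;>
      have := h.eq_of_endpoint_eq hm hm' (by omega) <;> omega
  have hle := card_le (Finset.Ioo a b) (Finset.range a ∪ Finset.Ioo b (2 * k)) fun m hm => by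
    simp only [Finset.mem_Ioo] at hm
    obtain ⟨p, hp, hmp, hpa, hpb, hside⟩ := across m (by omega) (by omega) (by omega)
    exact ⟨p, by simp only [Finset.mem_union, Finset.mem_range, Finset.mem_Ioo]; omega, hmp⟩
  have hge := card_le (Finset.range a ∪ Finset.Ioo b (2 * k)) (Finset.Ioo a b) fun m hm => by
    simp only [Finset.mem_union, Finset.mem_range, Finset.mem_Ioo] at hm
    obtain ⟨p, hp, hmp, hpa, hpb, hside⟩ := across m (by omega) (by omega) (by omega)
    exact ⟨p, by simp only [Finset.mem_Ioo]; omega, hmp⟩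
  rw [Finset.card_union_of_disjoint (Finset.disjoint_left.mpr fun m hm hm' => by
      simp only [Finset.mem_range, Finset.mem_Ioo] at hm hm'; omega),
    Finset.card_range, Nat.card_Ioo, Nat.card_Ioo] at hle hge
  omega

end CrossingChordSystem

section CircleRep

variable {V : Type*} [DecidableEq V] {G : SimpleGraph V} {τ w : List V} {p : V → Bool}

theorem IsCircleRep.count_eq_two (hτ : IsCircleRep G τ) (hw : w ~r τ.filter p) {v : V}
    (hv : v ∈ w) : w.count v = 2 := by
  rw [hw.perm.count_eq, List.count_filter (List.mem_filter.mp (hw.perm.subset hv)).2, hτ.1 v]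

theorem IsCircleRep.adj_iff_alternates (hτ : IsCircleRep G τ) (hw : w ~r τ.filter p)
    {u v : V} (hu : u ∈ w) (hv : v ∈ w) (huv : u ≠ v) : G.Adj u v ↔ Alternates w u v := by
  rw [hτ.2 u v huv, ← alternates_filter_iff (List.mem_filter.mp (hw.perm.subset hu)).2
    (List.mem_filter.mp (hw.perm.subset hv)).2 (hτ.1 u),
    hw.alternates_iff (hτ.count_eq_two hw hu) (hτ.count_eq_two hw hv)]

end CircleRep

theorem exists_of_sum_range_eq_one {f : ℕ → ℕ} {n : ℕ} (h : ∑ m ∈ Finset.range n, f m = 1) :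
    ∃ a < n, f a = 1 ∧ ∀ m < n, m ≠ a → f m = 0 := by
  induction n with
  | zero => simp at h
  | succ n ih =>
    rw [Finset.sum_range_succ] at h
    by_cases hn : f n = 0
    · obtain ⟨a, ha, hfa, h₀⟩ := ih (by omega)
      refine ⟨a, by omega, hfa, fun m hm hma => ?_⟩
      rcases Nat.lt_succ_iff_lt_or_eq.mp hm with hm | rfl
      exacts [h₀ m hm hma, hn]
    · have h₀ := Finset.sum_eq_zero_iff.mp (show ∑ m ∈ Finset.range n, f m = 0 by omega)
      exact ⟨n, by omega, by omega, fun m hm hmn => h₀ m (Finset.mem_range.mpr (by omega))⟩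

theorem exists_of_sum_range_eq_two {f : ℕ → ℕ} {n : ℕ} (h : ∑ m ∈ Finset.range n, f m = 2) :
    (∃ a < n, f a = 2 ∧ ∀ m < n, m ≠ a → f m = 0) ∨
      ∃ a b, a < b ∧ b < n ∧ f a = 1 ∧ f b = 1 ∧ ∀ m < n, m ≠ a → m ≠ b → f m = 0 := by
  induction n with
  | zero => simp at h
  | succ n ih =>
    rw [Finset.sum_range_succ] at h
    rcases Nat.lt_trichotomy (f n) 1 with hn | hn | hn
    · rcases ih (by omega) with ⟨a, ha, hfa, h₀⟩ | ⟨a, b, hab, hb, hfa, hfb, h₀⟩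
      · refine Or.inl ⟨a, by omega, hfa, fun m hm hma => ?_⟩
        rcases Nat.lt_succ_iff_lt_or_eq.mp hm with hm | rfl
        exacts [h₀ m hm hma, by omega]
      · refine Or.inr ⟨a, b, hab, by omega, hfa, hfb, fun m hm hma hmb => ?_⟩
        rcases Nat.lt_succ_iff_lt_or_eq.mp hm with hm | rfl
        exacts [h₀ m hm hma hmb, by omega]
    · obtain ⟨a, ha, hfa, h₀⟩ := exists_of_sum_range_eq_one (show ∑ m ∈ Finset.range n, f m = 1 by
        omega)
      refine Or.inr ⟨a, n, ha, by omega, hfa, hn, fun m hm hma hmn => h₀ m (by omega) hma⟩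
    · have h₀ := Finset.sum_eq_zero_iff.mp (show ∑ m ∈ Finset.range n, f m = 0 by omega)
      exact Or.inl ⟨n, by omega, by omega, fun m hm hmn => h₀ m (Finset.mem_range.mpr (by omega))⟩

section Blocks

variable {α : Type*} {γ : ℕ → List α} {n : ℕ}

abbrev concatBlocks (γ : ℕ → List α) (n : ℕ) : List α :=
  ((List.range n).map γ).flatten

theorem mem_concatBlocks {i : ℕ} {x : α} (hi : i < n) (hx : x ∈ γ i) : x ∈ concatBlocks γ n :=
  List.mem_flatten.mpr ⟨γ i, List.mem_map.mpr ⟨i, List.mem_range.mpr hi, rfl⟩, hx⟩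

structure OccursInBlocks [DecidableEq α] (γ : ℕ → List α) (n : ℕ) (v : α) (a b : ℕ) : Prop where
  lt : a < b
  lt_length : b < n
  count_left : (γ a).count v = 1
  count_right : (γ b).count v = 1
  not_mem : ∀ m < n, m ≠ a → m ≠ b → v ∉ γ m

theorem flatten_map_range'_eq_append {s len i : ℕ} (h₁ : s ≤ i) (h₂ : i < s + len) :
    ((List.range' s len).map γ).flatten = ((List.range' s (i - s)).map γ).flatten ++ γ i ++
      ((List.range' (i + 1) (s + len - (i + 1))).map γ).flatten := by
  obtain ⟨l, rfl⟩ : ∃ l, len = i - s + (l + 1) := ⟨len - (i - s) - 1, by omega⟩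
  rw [← List.range'_append_1, List.range'_succ, show s + (i - s) = i by omega,
    show s + (i - s + (l + 1)) - (i + 1) = l by omega]
  simp

theorem not_mem_flatten_map_range' {s len : ℕ} {v : α}
    (h : ∀ m, s ≤ m → m < s + len → v ∉ γ m) : v ∉ ((List.range' s len).map γ).flatten := by
  simpa [List.mem_flatten, List.mem_range'_1] using h

variable [DecidableEq α]

theorem count_flatten_map_range'_eq_sum_Ioo (a b : ℕ) (v : α) :
    ((List.range' (a + 1) (b - (a + 1))).map γ).flatten.count v =
      ∑ m ∈ Finset.Ioo a b, (γ m).count v := by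
  rw [List.count_flatten, List.map_map]
  rfl

theorem OccursInBlocks.mem_left {v : α} {a b : ℕ} (h : OccursInBlocks γ n v a b) : v ∈ γ a :=
  List.count_pos_iff.mp (by rw [h.count_left]; omega)

theorem OccursInBlocks.mem_right {v : α} {a b : ℕ} (h : OccursInBlocks γ n v a b) : v ∈ γ b :=
  List.count_pos_iff.mp (by rw [h.count_right]; omega)

theorem alternates_concatBlocks_iff {a b : ℕ} {u v : α} (hu : OccursInBlocks γ n u a b)
    (hva : v ∉ γ a) (hvb : v ∉ γ b) :
    Alternates (concatBlocks γ n) u v ↔ ∑ m ∈ Finset.Ioo a b, (γ m).count v = 1 := by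
  have hab := hu.lt
  have hbn := hu.lt_length
  obtain ⟨a₁, a₂, ha, ha₁, ha₂⟩ := List.exists_eq_append_cons_of_count_eq_one hu.count_left
  obtain ⟨b₁, b₂, hb, hb₁, -⟩ := List.exists_eq_append_cons_of_count_eq_one hu.count_right
  set W₀ := ((List.range' 0 a).map γ).flatten
  set W₁ := ((List.range' (a + 1) (b - (a + 1))).map γ).flatten
  set W₂ := ((List.range' (b + 1) (n - (b + 1))).map γ).flatten
  have hw : concatBlocks γ n = (W₀ ++ a₁) ++ u :: (a₂ ++ W₁ ++ b₁) ++ u :: (b₂ ++ W₂) := by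
    rw [concatBlocks, List.range_eq_range', flatten_map_range'_eq_append (Nat.zero_le a) (by omega),
      flatten_map_range'_eq_append (s := a + 1) (i := b) (by omega) (by omega), ha, hb]
    simp [W₀, W₁, W₂, show a + 1 + (n - (a + 1)) - (b + 1) = n - (b + 1) by omega]
  have hW₀ : u ∉ W₀ := not_mem_flatten_map_range' fun m _ hm =>
    hu.not_mem m (by omega) (by omega) (by omega)
  have hW₁ : u ∉ W₁ := not_mem_flatten_map_range' fun m hm hm' =>
    hu.not_mem m (by omega) (by omega) (by omega)
  have ha₂v : a₂.count v = 0 := List.count_eq_zero.mpr fun h => hva (by simp [ha, h])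
  have hb₁v : b₁.count v = 0 := List.count_eq_zero.mpr fun h => hvb (by simp [hb, h])
  rw [hw, alternates_append_cons_append_cons_iff (by simp [hW₀, ha₁]) (by simp [ha₂, hW₁, hb₁]),
    List.count_append, List.count_append, ha₂v, hb₁v, count_flatten_map_range'_eq_sum_Ioo]
  simp

theorem not_alternates_concatBlocks {m : ℕ} {u v : α} (hm : m < n) (hu : (γ m).count u = 2)
    (hu₀ : ∀ m' < n, m' ≠ m → u ∉ γ m') (hv : v ∉ γ m) : ¬Alternates (concatBlocks γ n) u v := by
  obtain ⟨s₀, s₁, s₂, hs, h₀, h₁, -⟩ := List.exists_eq_append_cons_append_cons_of_count_eq_two hu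
  set W₀ := ((List.range' 0 m).map γ).flatten
  set W₂ := ((List.range' (m + 1) (n - (m + 1))).map γ).flatten
  have hw : concatBlocks γ n = (W₀ ++ s₀) ++ u :: s₁ ++ u :: (s₂ ++ W₂) := by
    rw [concatBlocks, List.range_eq_range', flatten_map_range'_eq_append (Nat.zero_le m) (by omega),
      hs]
    simp [W₀, W₂]
  have hW₀ : u ∉ W₀ := not_mem_flatten_map_range' fun m' _ hm' => hu₀ m' (by omega) (by omega)
  rw [hw, alternates_append_cons_append_cons_iff (by simp [hW₀, h₀]) h₁,
    List.count_eq_zero.mpr fun h => hv (by simp [hs, h])]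
  simp

theorem exists_occursInBlocks_of_count_eq_two {v : α} (hv : (concatBlocks γ n).count v = 2)
    (halt : ∀ m < n, v ∈ γ m → ∃ u ∉ γ m, Alternates (concatBlocks γ n) v u) :
    ∃ a b, OccursInBlocks γ n v a b := by
  rw [concatBlocks, List.count_flatten, List.map_map] at hv
  change ∑ m ∈ Finset.range n, (γ m).count v = 2 at hv
  rcases exists_of_sum_range_eq_two hv with ⟨m, hm, h₂, h₀⟩ | ⟨a, b, hab, hb, ha₁, hb₁, h₀⟩
  · obtain ⟨u, hu, hvu⟩ := halt m hm (List.count_pos_iff.mp (by omega))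
    exact absurd hvu (not_alternates_concatBlocks hm h₂
      (fun m' hm' hne => List.count_eq_zero.mp (h₀ m' hm' hne)) hu)
  · exact ⟨a, b, hab, hb, ha₁, hb₁, fun m hm h₁ h₂ => List.count_eq_zero.mp (h₀ m hm h₁ h₂)⟩

theorem alternates_concatBlocks_iff_interleaved {a b c d : ℕ} {u v : α}
    (hu : OccursInBlocks γ n u a b) (hv : OccursInBlocks γ n v c d) (hac : a ≠ c) (had : a ≠ d)
    (hbc : b ≠ c) (hbd : b ≠ d) : Alternates (concatBlocks γ n) u v ↔ Interleaved a b c d := by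
  have := hu.lt
  have := hu.lt_length
  have := hv.lt
  rw [alternates_concatBlocks_iff hu (hv.not_mem a (by omega) hac had)
    (hv.not_mem b hu.lt_length hbc hbd)]
  have hcount : ∀ m ∈ Finset.Ioo a b,
      (γ m).count v = (if m = c then 1 else 0) + (if m = d then 1 else 0) := by
    intro m hm
    rw [Finset.mem_Ioo] at hm
    rcases eq_or_ne m c with rfl | hmc
    · simp [hv.count_left, show m ≠ d by omega]
    rcases eq_or_ne m d with rfl | hmd
    · simp [hv.count_right, hmc]
    simp [hmc, hmd, List.count_eq_zero.mpr (hv.not_mem m (by omega) hmc hmd)]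
  rw [Finset.sum_congr rfl hcount, Finset.sum_add_distrib, Finset.sum_ite_eq', Finset.sum_ite_eq']
  simp only [Finset.mem_Ioo, Interleaved]
  split_ifs <;> grind

end Blocks

/-- The subwords induced by the two sides of a split: even blocks hold one side, odd blocks the
other. -/
structure SplitBlocks {α : Type*} [DecidableEq α] (k : ℕ) (γ : ℕ → List α) : Prop where
  ne_nil : ∀ i < 2 * k, γ i ≠ []
  mod_two_eq : ∀ i < 2 * k, ∀ j < 2 * k, ∀ x ∈ γ i, x ∈ γ j → i % 2 = j % 2
  count_eq_two : ∀ i < 2 * k, ∀ x ∈ γ i, (concatBlocks γ (2 * k)).count x = 2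
  alternates : ∀ i < 2 * k, ∀ j < 2 * k, i % 2 ≠ j % 2 → ∀ x ∈ γ i, ∀ y ∈ γ j,
    Alternates (concatBlocks γ (2 * k)) x y

namespace SplitBlocks

variable {α : Type*} [DecidableEq α] {k : ℕ} {γ : ℕ → List α}

theorem exists_occursInBlocks (h : SplitBlocks k γ) {m : ℕ} (hm : m < 2 * k) {x : α}
    (hx : x ∈ γ m) : ∃ a b, OccursInBlocks γ (2 * k) x a b ∧ (m = a ∨ m = b) := by
  obtain ⟨a, b, hab⟩ := exists_occursInBlocks_of_count_eq_two (h.count_eq_two m hm x hx)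
    fun m' hm' hxm' => by
      -- a symbol `u` of a block of the other parity
      obtain ⟨u, hu⟩ := List.exists_mem_of_ne_nil _ (h.ne_nil (1 - m' % 2) (by omega))
      refine ⟨u, fun hu' => ?_, h.alternates m' hm' _ (by omega) (by omega) x hxm' u hu⟩
      have := h.mod_two_eq _ (by omega) _ hm' u hu hu'
      omega
  refine ⟨a, b, hab, ?_⟩
  by_contra hne
  exact hab.not_mem m hm (fun h => hne (Or.inl h)) (fun h => hne (Or.inr h)) hx

theorem mod_two_eq_of_occursInBlocks (h : SplitBlocks k γ) {x : α} {a b : ℕ}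
    (hx : OccursInBlocks γ (2 * k) x a b) : a % 2 = b % 2 :=
  h.mod_two_eq a (hx.lt.trans hx.lt_length) b hx.lt_length x hx.mem_left hx.mem_right

theorem crossingChordSystem (h : SplitBlocks k γ) :
    CrossingChordSystem k fun a b => ∃ x, OccursInBlocks γ (2 * k) x a b where
  lt := fun ⟨_, hx⟩ => ⟨hx.lt, hx.lt_length⟩
  mod_two_eq := fun ⟨_, hx⟩ => h.mod_two_eq_of_occursInBlocks hx
  exists_of_lt m hm := by
    obtain ⟨x, hx⟩ := List.exists_mem_of_ne_nil _ (h.ne_nil m hm)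
    obtain ⟨a, b, hab, hm'⟩ := h.exists_occursInBlocks hm hx
    exact ⟨a, b, ⟨x, hab⟩, hm'⟩
  interleaved := by
    rintro a b c d ⟨x, hx⟩ ⟨y, hy⟩ hac
    have := h.mod_two_eq_of_occursInBlocks hx
    have := h.mod_two_eq_of_occursInBlocks hy
    refine (alternates_concatBlocks_iff_interleaved hx hy ?_ ?_ ?_ ?_).mp
      (h.alternates a (hx.lt.trans hx.lt_length) c (hy.lt.trans hy.lt_length) hac x hx.mem_left
        y hy.mem_left) <;> omega

theorem alternates_of_ne_of_ne_opposite (h : SplitBlocks k γ) {i j : ℕ} (hi : i < 2 * k)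
    (hj : j < 2 * k) (hji : j ≠ i) (hjk : j ≠ (i + k) % (2 * k)) {x y : α} (hx : x ∈ γ i)
    (hy : y ∈ γ j) : Alternates (concatBlocks γ (2 * k)) x y := by
  by_cases hij : i % 2 ≠ j % 2
  · exact h.alternates i hi j hj hij x hx y hy
  obtain ⟨a, b, hxab, hiab⟩ := h.exists_occursInBlocks hi hx
  obtain ⟨c, d, hycd, hjcd⟩ := h.exists_occursInBlocks hj hy
  have hb : b = a + k := h.crossingChordSystem.eq_add ⟨x, hxab⟩
  have hd : d = c + k := h.crossingChordSystem.eq_add ⟨y, hycd⟩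
  have hbn := hxab.lt_length
  have hdn := hycd.lt_length
  -- `(i + k) % (2 * k)` is the other end of the diameter through `i`
  have hjab : j ≠ a ∧ j ≠ b := by
    rcases hiab with hia | hib
    · rw [hia, Nat.mod_eq_of_lt (by omega)] at hjk
      omega
    · rw [hib, hb, show a + k + k = a + 2 * k by ring, Nat.add_mod_right,
        Nat.mod_eq_of_lt (by omega)] at hjk
      omega
  rw [alternates_concatBlocks_iff_interleaved hxab hycd (by omega) (by omega) (by omega) (by omega),
    Interleaved]
  omega

end SplitBlocks

theorem IsCircleRep.splitBlocks {V : Type*} [DecidableEq V] {G : SimpleGraph V} {A B : Finset V}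
    {τ : List V} {k : ℕ} {γ : ℕ → List V} (hτ : IsCircleRep G τ) (hAB : Disjoint A B)
    (hadj : ∀ a ∈ A, ∀ b ∈ B, G.Adj a b)
    (hjoin : concatBlocks γ (2 * k) ~r τ.filter (fun x => decide (x ∈ A ∪ B)))
    (hne : ∀ i < 2 * k, γ i ≠ [])
    (hAword : ∀ i < 2 * k, i % 2 = 0 → ∀ x ∈ γ i, x ∈ A)
    (hBword : ∀ i < 2 * k, i % 2 = 1 → ∀ x ∈ γ i, x ∈ B) : SplitBlocks k γ where
  ne_nil := hne
  mod_two_eq i hi j hj x hx hx' := by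
    by_contra hij
    rcases Nat.mod_two_eq_zero_or_one i with h | h
    · exact Finset.disjoint_left.mp hAB (hAword i hi h x hx) (hBword j hj (by omega) x hx')
    · exact Finset.disjoint_left.mp hAB (hAword j hj (by omega) x hx') (hBword i hi h x hx)
  count_eq_two i hi x hx := hτ.count_eq_two hjoin (mem_concatBlocks hi hx)
  alternates i hi j hj hij x hx y hy := by
    have adj_iff := hτ.adj_iff_alternates hjoin (mem_concatBlocks hi hx) (mem_concatBlocks hj hy)
    rcases Nat.mod_two_eq_zero_or_one i with h | h
    · have hxA := hAword i hi h x hx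
      have hyB := hBword j hj (by omega) y hy
      exact (adj_iff (ne_of_mem_of_not_mem hxA (Finset.disjoint_right.mp hAB hyB))).mp
        (hadj x hxA y hyB)
    · have hxB := hBword i hi h x hx
      have hyA := hAword j hj (by omega) y hy
      exact (adj_iff (ne_of_mem_of_not_mem hxB (Finset.disjoint_left.mp hAB hyA))).mp
        (hadj y hyA x hxB).symm

theorem symbols_of_nonopposite_subwords_adjacent_general
    {V : Type*} [DecidableEq V]
    (G : SimpleGraph V)
    (A B SA SB : Finset V) (hsplit : IsSplit G A B SA SB)
    (τ : List V) (hτ : IsCircleRep G τ)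
    (k : ℕ) (γ : ℕ → List V)
    (hjoin : ((List.range (2 * k)).map γ).flatten ~r
      τ.filter (fun x => decide (x ∈ A ∪ B)))
    (hne : ∀ i < 2 * k, γ i ≠ [])
    (hAword : ∀ i < 2 * k, i % 2 = 0 → ∀ x ∈ γ i, x ∈ A)
    (hBword : ∀ i < 2 * k, i % 2 = 1 → ∀ x ∈ γ i, x ∈ B) :
    ∀ i < 2 * k, ∀ j < 2 * k, j ≠ i → j ≠ (i + k) % (2 * k) →
      ∀ x ∈ γ i, ∀ y ∈ γ j, x ≠ y → G.Adj x y := by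
  obtain ⟨-, hAB, -, -, -, -, -, hadj, -⟩ := hsplit
  have hblocks := hτ.splitBlocks hAB hadj hjoin hne hAword hBword
  intro i hi j hj hji hjk x hx y hy hxy
  exact (hτ.adj_iff_alternates hjoin (mem_concatBlocks hi hx) (mem_concatBlocks hj hy) hxy).mpr
    (hblocks.alternates_of_ne_of_ne_opposite hi hj hji hjk hx hy)

/-- Lemma (group ordering, part (c)): if `x` occurs in `γ i` and `y` occurs in
`γ j`, where `γ j` is neither `γ i` nor its opposite word `γ (i+k)` (indices
modulo `2k`), and `x ≠ y`, then `x` and `y` are adjacent in `G`. -/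
theorem symbols_of_nonopposite_subwords_adjacent
    {V : Type*} [DecidableEq V] [Fintype V]
    (G : SimpleGraph V) (hconn : G.Connected)
    (A B SA SB : Finset V) (hsplit : IsSplit G A B SA SB)
    (τ : List V) (hτ : IsCircleRep G τ)
    (k : ℕ) (γ : ℕ → List V)
    (hjoin : ((List.range (2 * k)).map γ).flatten ~r
      τ.filter (fun x => decide (x ∈ A ∪ B)))
    (hne : ∀ i < 2 * k, γ i ≠ [])
    (hAword : ∀ i < 2 * k, i % 2 = 0 → ∀ x ∈ γ i, x ∈ A)
    (hBword : ∀ i < 2 * k, i % 2 = 1 → ∀ x ∈ γ i, x ∈ B) :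
    ∀ i < 2 * k, ∀ j < 2 * k, j ≠ i → j ≠ (i + k) % (2 * k) →
      ∀ x ∈ γ i, ∀ y ∈ γ j, x ≠ y → G.Adj x y :=
  symbols_of_nonopposite_subwords_adjacent_general G A B SA SB hsplit τ hτ k γ hjoin hne hAword
    hBword
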